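/- Every real root of the polynomial g(n) = ∏_{j=d-k+1}^{d}(n+j) + m·∏_{j=0}^{k-1}(n-j), where m ≥ 1, d ≥ 2, 1 ≤ k ≤ d, lies in the open interval (-d, k-1) ⊆ (-d, d-1). Hence all real roots of f(n) = C(n+d,d) + m·C(n+d-k,d) lie in [-d+1, d-1]. -/

import Mathlib

/-! With falling factorials `(y)_k = y (y - 1) ⋯ (y - k + 1)` we have `g x = (x + d)_k + m (x)_k`
and `d! f x = (x + d - k)_{d-k} g x`. For `x ≥ k - 1` the first term of `g` is positive and the
second nonnegative. For `2x + d < 0` each factor `x + d - j` of `(x + d)_k` is strictly smaller in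
absolute value than the factor `x - j` of `(x)_k`, so with `m ≥ 1` the two terms cannot cancel.
Hence every real root of `g` lies in `[-d/2, k - 1)`, and the other roots of `f` are
`-1, …, -(d - k)`. -/

open Finset Polynomial

theorem Finset.prod_lt_prod_of_nonempty_of_nonneg {ι R : Type*} [CommSemiring R] [LinearOrder R]
    [IsStrictOrderedRing R] {s : Finset ι} {f g : ι → R} (hf : ∀ i ∈ s, 0 ≤ f i)
    (hfg : ∀ i ∈ s, f i < g i) (hs : s.Nonempty) : ∏ i ∈ s, f i < ∏ i ∈ s, g i := by
  by_cases hpos : ∀ i ∈ s, 0 < f i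
  · exact prod_lt_prod_of_nonempty hpos hfg hs
  · push Not at hpos
    obtain ⟨i, hi, hfi⟩ := hpos
    rw [prod_eq_zero hi (le_antisymm hfi (hf i hi))]
    exact prod_pos fun j hj => (hf j hj).trans_lt (hfg j hj)

section descPochhammer

variable {R : Type*} [CommRing R]

theorem prod_Icc_add_eq_descPochhammer_eval {n d : ℕ} (hnd : n ≤ d) (x : R) :
    ∏ j ∈ Icc (d - n + 1) d, (x + j) = (descPochhammer R n).eval (x + d) := by
  rw [descPochhammer_eval_eq_prod_range]
  refine prod_nbij' (fun j => d - j) (fun j => d - j) ?_ ?_ ?_ ?_ ?_ <;> intro j hj <;>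
    simp only [mem_Icc, mem_range] at hj ⊢
  all_goals try omega
  rw [Nat.cast_sub (by omega : j ≤ d)]
  ring

theorem prod_Icc_one_add_eq_descPochhammer_eval (d : ℕ) (x : R) :
    ∏ i ∈ Icc 1 d, (x + i) = (descPochhammer R d).eval (x + d) := by
  simpa using prod_Icc_add_eq_descPochhammer_eval le_rfl x

theorem descPochhammer_eval_mul_eval_sub (n m : ℕ) (x : R) :
    (descPochhammer R n).eval x * (descPochhammer R m).eval (x - n) =
      (descPochhammer R (n + m)).eval x := by
  rw [← descPochhammer_mul, eval_mul, eval_comp, eval_sub, eval_X, eval_natCast]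

theorem descPochhammer_eval_add_mul_eq_mul {k d : ℕ} (hkd : k ≤ d) (m x : R) :
    (descPochhammer R d).eval (x + d) + m * (descPochhammer R d).eval (x + d - k) =
      (descPochhammer R (d - k)).eval (x + d - k) *
        ((descPochhammer R k).eval (x + d) + m * (descPochhammer R k).eval x) := by
  have h₁ := descPochhammer_eval_mul_eval_sub (R := R) k (d - k) (x + d)
  have h₂ := descPochhammer_eval_mul_eval_sub (R := R) (d - k) k (x + d - k)
  have hshift : x + d - k - ((d - k : ℕ) : R) = x := by rw [Nat.cast_sub hkd]; ring
  rw [Nat.add_sub_cancel' hkd] at h₁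
  rw [Nat.sub_add_cancel hkd, hshift] at h₂
  rw [← h₁, ← h₂]
  ring

end descPochhammer

section rootBounds

variable {R : Type*} [CommRing R] [LinearOrder R] [IsStrictOrderedRing R] {k : ℕ} {a m x : R}

theorem descPochhammer_eval_add_mul_pos (ha : 0 < a) (hm : 0 ≤ m) (hx : (k : R) - 1 ≤ x) :
    0 < (descPochhammer R k).eval (x + a) + m * (descPochhammer R k).eval x :=
  add_pos_of_pos_of_nonneg (descPochhammer_pos (by linarith))
    (mul_nonneg hm (descPochhammer_nonneg hx))

theorem abs_descPochhammer_eval_add_lt (hk : k ≠ 0) (ha : 0 < a) (hx : 2 * x + a < 0) :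
    |(descPochhammer R k).eval (x + a)| < |(descPochhammer R k).eval x| := by
  simp only [descPochhammer_eval_eq_prod_range, abs_prod]
  refine prod_lt_prod_of_nonempty_of_nonneg (fun _ _ => abs_nonneg _) (fun j _ => ?_)
    (nonempty_range_iff.2 hk)
  have hj : (0 : R) ≤ j := Nat.cast_nonneg j
  rw [abs_of_neg (by linarith : x - j < 0), abs_lt]
  constructor <;> linarith

theorem descPochhammer_eval_add_mul_ne_zero (hk : k ≠ 0) (ha : 0 < a) (hm : 1 ≤ m)
    (hx : 2 * x + a < 0) :
    (descPochhammer R k).eval (x + a) + m * (descPochhammer R k).eval x ≠ 0 := by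
  intro h
  have hlt := abs_descPochhammer_eval_add_lt hk ha hx
  rw [eq_neg_of_add_eq_zero_left h, abs_neg, abs_mul, abs_of_pos (by linarith : 0 < m)] at hlt
  nlinarith [abs_nonneg ((descPochhammer R k).eval x)]

theorem bounds_of_descPochhammer_eval_add_mul_eq_zero (hk : k ≠ 0) (ha : 0 < a) (hm : 1 ≤ m)
    (h : (descPochhammer R k).eval (x + a) + m * (descPochhammer R k).eval x = 0) :
    -a ≤ 2 * x ∧ x < k - 1 := by
  constructor
  · by_contra! hx
    exact descPochhammer_eval_add_mul_ne_zero hk ha hm (by linarith) h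
  · by_contra! hx
    exact (descPochhammer_eval_add_mul_pos ha (by linarith) hx).ne' h

end rootBounds

theorem stmt_14 (m d k : ℕ) (hm : 1 ≤ m) (hd : 2 ≤ d) (hk1 : 1 ≤ k) (hkd : k ≤ d)
    (g f : ℝ → ℝ)
    (hg : ∀ x : ℝ, g x = (∏ j ∈ Finset.Icc (d - k + 1) d, (x + (j : ℝ)))
        + m * ∏ j ∈ Finset.range k, (x - (j : ℝ)))
    (hf : ∀ x : ℝ, f x = (∏ i ∈ Finset.Icc 1 d, (x + (i : ℝ))) / (d.factorial : ℝ)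
        + m * (∏ i ∈ Finset.Icc 1 d, (x + (i : ℝ) - (k : ℝ))) / (d.factorial : ℝ)) :
    (∀ x : ℝ, g x = 0 → -(d : ℝ) < x ∧ x < (k : ℝ) - 1)
      ∧ ∀ x : ℝ, f x = 0 → -(d : ℝ) + 1 ≤ x ∧ x ≤ (d : ℝ) - 1 := by
  have hdR : (2 : ℝ) ≤ d := by exact_mod_cast hd
  have hkR : (1 : ℝ) ≤ k := by exact_mod_cast hk1
  have hkdR : (k : ℝ) ≤ d := by exact_mod_cast hkd
  have hg' (x : ℝ) : g x = (descPochhammer ℝ k).eval (x + d) + m * (descPochhammer ℝ k).eval x := by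
    rw [hg, prod_Icc_add_eq_descPochhammer_eval hkd, ← descPochhammer_eval_eq_prod_range]
  have hroots (x : ℝ) (hx : g x = 0) : -(d : ℝ) ≤ 2 * x ∧ x < k - 1 :=
    bounds_of_descPochhammer_eval_add_mul_eq_zero (by omega) (by linarith)
      (by exact_mod_cast hm) (hg' x ▸ hx)
  have hf' (x : ℝ) : f x = (descPochhammer ℝ (d - k)).eval (x + d - k) * g x / d.factorial := by
    have hshift : ∏ i ∈ Icc 1 d, (x + (i : ℝ) - k) = ∏ i ∈ Icc 1 d, (x - k + i) :=
      prod_congr rfl fun _ _ => by ring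
    rw [hf, hg', ← descPochhammer_eval_add_mul_eq_mul hkd, hshift,
      prod_Icc_one_add_eq_descPochhammer_eval, prod_Icc_one_add_eq_descPochhammer_eval,
      sub_add_eq_add_sub, add_div, mul_div_assoc]
  refine ⟨fun x hx => ?_, fun x hx => ?_⟩
  · obtain ⟨hlo, hhi⟩ := hroots x hx
    constructor <;> linarith
  rw [hf', div_eq_zero_iff, mul_eq_zero] at hx
  rcases hx with (hP | hgx) | hfac
  · rw [descPochhammer_eval_eq_prod_range, prod_eq_zero_iff] at hP
    obtain ⟨j, hj, hxj⟩ := hP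
    have hjR : (j : ℝ) + k + 1 ≤ d := by exact_mod_cast (by grind : j + k + 1 ≤ d)
    constructor <;> linarith
  · obtain ⟨hlo, hhi⟩ := hroots x hgx
    constructor <;> linarith
  · exact absurd hfac (by positivity)
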